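/- Let T ∈ GL(n+1,ℝ) and a ∈ ℝ^{n+1} be nonzero with ‖T⁻¹(a)‖ < 1. Then T̄ₐ : Sⁿ → Sⁿ, T̄ₐ(x) = (a+T(x))/‖a+T(x)‖, is a homeomorphism. -/

import Mathlib

/-!
Write `b = T⁻¹ a`, so that `‖b‖ < 1` and `a + T x = T (x + b)`. Then `T̄ₐ` is the composite of
`x ↦ (x + b)/‖x + b‖` with the radial projection `v ↦ T v/‖T v‖`, and the latter is a
homeomorphism of the sphere with inverse the radial projection of `T⁻¹`. The former is a bijection
because every ray issuing from the interior point `-b` of the unit ball meets the unit sphere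
exactly once: at least once by the intermediate value theorem, at most once by convexity of the
ball. Being a continuous bijection of the compact sphere, it is a homeomorphism.
-/

/-- The "affine" map `x ↦ (a + T(x))/‖a + T(x)‖` induced on the unit sphere. -/
noncomputable def affAct {m : ℕ} (A : Matrix (Fin m) (Fin m) ℝ)
    (a x : EuclideanSpace ℝ (Fin m)) : EuclideanSpace ℝ (Fin m) :=
  ‖a + Matrix.toEuclideanLin A x‖⁻¹ • (a + Matrix.toEuclideanLin A x)

open Metric NormedSpace

section RadialProjection

variable {E F : Type*} [NormedAddCommGroup E] [NormedSpace ℝ E]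
  [NormedAddCommGroup F] [NormedSpace ℝ F]

theorem normalize_mem_sphere {x : E} (hx : x ≠ 0) : normalize x ∈ sphere (0 : E) 1 := by
  simpa using norm_normalize hx

theorem Continuous.normalize {X : Type*} [TopologicalSpace X] {f : X → E} (hf : Continuous f)
    (h0 : ∀ x, f x ≠ 0) : Continuous fun x ↦ normalize (f x) :=
  (hf.norm.inv₀ fun x ↦ norm_ne_zero_iff.mpr (h0 x)).smul hf

theorem normalize_map_normalize {𝓕 : Type*} [FunLike 𝓕 E F] [LinearMapClass 𝓕 ℝ E F]
    (L : 𝓕) (v : E) : normalize (L (normalize v)) = normalize (L v) := by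
  rcases eq_or_ne v 0 with rfl | hv
  · simp
  · rw [show normalize v = ‖v‖⁻¹ • v from rfl, map_smul,
      normalize_smul_of_pos (inv_pos.mpr (norm_pos_iff.mpr hv))]

theorem ContinuousLinearEquiv.map_unitSphere_ne_zero (L : E ≃L[ℝ] F) (x : sphere (0 : E) 1) :
    L x ≠ 0 :=
  L.map_ne_zero_iff.mpr (ne_zero_of_mem_unit_sphere x)

noncomputable def ContinuousLinearEquiv.sphereHomeomorph (L : E ≃L[ℝ] F) :
    sphere (0 : E) 1 ≃ₜ sphere (0 : F) 1 where
  toFun x := ⟨normalize (L x), normalize_mem_sphere (L.map_unitSphere_ne_zero x)⟩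
  invFun y := ⟨normalize (L.symm y), normalize_mem_sphere (L.symm.map_unitSphere_ne_zero y)⟩
  left_inv x := by
    ext1
    simp only [normalize_map_normalize, ContinuousLinearEquiv.symm_apply_apply]
    exact normalize_eq_self_of_norm_eq_one (norm_eq_of_mem_sphere x)
  right_inv y := by
    ext1
    simp only [normalize_map_normalize, ContinuousLinearEquiv.apply_symm_apply]
    exact normalize_eq_self_of_norm_eq_one (norm_eq_of_mem_sphere y)
  continuous_toFun :=
    ((L.continuous.comp continuous_subtype_val).normalize L.map_unitSphere_ne_zero).subtype_mk _
  continuous_invFun :=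
    ((L.symm.continuous.comp continuous_subtype_val).normalize
      L.symm.map_unitSphere_ne_zero).subtype_mk _

end RadialProjection

section ProjectionFromInteriorPoint

variable {E : Type*} [NormedAddCommGroup E] {b : E}

theorem add_ne_zero_of_norm_lt_one (hb : ‖b‖ < 1) (x : sphere (0 : E) 1) :
    (x : E) + b ≠ 0 := by
  intro h
  have hx := norm_eq_of_mem_sphere x
  rw [eq_neg_of_add_eq_zero_left h, norm_neg] at hx
  exact hb.ne hx

variable [NormedSpace ℝ E]

/-- `r • w - b` lies on the open segment from `-b` to `s • w - b`, and the unit ball is convex. -/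
theorem norm_smul_sub_lt_one_of_lt (hb : ‖b‖ < 1) {w : E} {r s : ℝ} (hr : 0 ≤ r)
    (hrs : r < s) (hs : ‖s • w - b‖ = 1) : ‖r • w - b‖ < 1 := by
  have hs0 : 0 < s := hr.trans_lt hrs
  have hrs' : r / s < 1 := (div_lt_one hs0).mpr hrs
  have hsplit : r • w - b = (r / s) • (s • w - b) + (1 - r / s) • (-b) := by
    rw [smul_sub, smul_smul, div_mul_cancel₀ r hs0.ne']
    module
  calc ‖r • w - b‖ ≤ r / s * ‖s • w - b‖ + (1 - r / s) * ‖b‖ := by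
        rw [hsplit]
        refine (norm_add_le _ _).trans_eq ?_
        rw [norm_smul, norm_smul, norm_neg, Real.norm_of_nonneg (by positivity),
          Real.norm_of_nonneg (by linarith)]
    _ < 1 := by rw [hs]; nlinarith

theorem eq_of_norm_smul_sub_eq_one (hb : ‖b‖ < 1) {w : E} {r s : ℝ} (hr : 0 ≤ r) (hs : 0 ≤ s)
    (hr1 : ‖r • w - b‖ = 1) (hs1 : ‖s • w - b‖ = 1) : r = s := by
  by_contra hne
  rcases lt_or_gt_of_ne hne with h | h
  · exact (norm_smul_sub_lt_one_of_lt hb hr h hs1).ne hr1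
  · exact (norm_smul_sub_lt_one_of_lt hb hs h hr1).ne hs1

theorem exists_pos_norm_smul_sub_eq_one (hb : ‖b‖ < 1) (y : sphere (0 : E) 1) :
    ∃ t : ℝ, 0 < t ∧ ‖t • (y : E) - b‖ = 1 := by
  have hcont : Continuous fun t : ℝ ↦ ‖t • (y : E) - b‖ := by fun_prop
  have h2 : 1 ≤ ‖(2 : ℝ) • (y : E) - b‖ := by
    have := norm_sub_norm_le ((2 : ℝ) • (y : E)) b
    rw [norm_smul, norm_eq_of_mem_sphere] at this
    norm_num at this
    linarith
  obtain ⟨t, ht, ht1⟩ := intermediate_value_Icc zero_le_two hcont.continuousOn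
    ⟨by simpa using hb.le, h2⟩
  refine ⟨t, ht.1.lt_of_ne ?_, ht1⟩
  rintro rfl
  simp only [zero_smul, zero_sub, norm_neg] at ht1
  exact hb.ne ht1

theorem eq_norm_smul_normalize_sub (x b : E) : x = ‖x + b‖ • normalize (x + b) - b := by
  rw [norm_smul_normalize, add_sub_cancel_right]

noncomputable def sphereShift (hb : ‖b‖ < 1) (x : sphere (0 : E) 1) : sphere (0 : E) 1 :=
  ⟨normalize ((x : E) + b), normalize_mem_sphere (add_ne_zero_of_norm_lt_one hb x)⟩

theorem continuous_sphereShift (hb : ‖b‖ < 1) : Continuous (sphereShift hb) :=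
  ((continuous_subtype_val.add continuous_const).normalize
    (add_ne_zero_of_norm_lt_one hb)).subtype_mk _

theorem sphereShift_injective (hb : ‖b‖ < 1) : Function.Injective (sphereShift hb) := by
  intro x y hxy
  have hw : normalize ((x : E) + b) = normalize ((y : E) + b) := congrArg Subtype.val hxy
  have hx := eq_norm_smul_normalize_sub (x : E) b
  have hy := eq_norm_smul_normalize_sub (y : E) b
  rw [hw] at hx
  have hrs : ‖(x : E) + b‖ = ‖(y : E) + b‖ := eq_of_norm_smul_sub_eq_one hb (norm_nonneg _)
    (norm_nonneg _) (hx ▸ norm_eq_of_mem_sphere x) (hy ▸ norm_eq_of_mem_sphere y)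
  exact Subtype.ext (hx.trans (hrs ▸ hy.symm))

theorem sphereShift_surjective (hb : ‖b‖ < 1) : Function.Surjective (sphereShift hb) := by
  intro y
  obtain ⟨t, ht, ht1⟩ := exists_pos_norm_smul_sub_eq_one hb y
  refine ⟨⟨t • (y : E) - b, by simpa using ht1⟩, Subtype.ext ?_⟩
  change normalize (t • (y : E) - b + b) = y
  rw [sub_add_cancel, normalize_smul_of_pos ht,
    normalize_eq_self_of_norm_eq_one (norm_eq_of_mem_sphere y)]

noncomputable def sphereShiftHomeomorph [ProperSpace E] (hb : ‖b‖ < 1) :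
    sphere (0 : E) 1 ≃ₜ sphere (0 : E) 1 :=
  (continuous_sphereShift hb).homeoOfEquivCompactToT2
    (f := Equiv.ofBijective _ ⟨sphereShift_injective hb, sphereShift_surjective hb⟩)

end ProjectionFromInteriorPoint

noncomputable def Matrix.GeneralLinearGroup.toEuclideanCLE {ι : Type*} [Fintype ι]
    [DecidableEq ι] (T : GL ι ℝ) : EuclideanSpace ℝ ι ≃L[ℝ] EuclideanSpace ℝ ι :=
  ContinuousLinearEquiv.unitsEquiv ℝ _ (Units.map Matrix.toEuclideanCLM.toMonoidHom T)

theorem stmt11_general (n : ℕ) (T : GL (Fin (n + 1)) ℝ) (a : EuclideanSpace ℝ (Fin (n + 1)))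
    (hlt : ‖Matrix.toEuclideanLin ((T⁻¹ : GL (Fin (n + 1)) ℝ) : Matrix (Fin (n + 1)) (Fin (n + 1)) ℝ) a‖ < 1) :
    ∃ h : Metric.sphere (0 : EuclideanSpace ℝ (Fin (n + 1))) 1 ≃ₜ
          Metric.sphere (0 : EuclideanSpace ℝ (Fin (n + 1))) 1,
      ∀ x : Metric.sphere (0 : EuclideanSpace ℝ (Fin (n + 1))) 1,
        (h x : EuclideanSpace ℝ (Fin (n + 1))) =
          affAct (T : Matrix (Fin (n + 1)) (Fin (n + 1)) ℝ) a (x : EuclideanSpace ℝ (Fin (n + 1))) := by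
  let L := T.toEuclideanCLE
  have hb : ‖L.symm a‖ < 1 := hlt
  refine ⟨(sphereShiftHomeomorph hb).trans L.sphereHomeomorph, fun x ↦ ?_⟩
  change normalize (L (normalize ((x : _) + L.symm a))) = normalize (a + L x)
  rw [normalize_map_normalize, map_add, L.apply_symm_apply, add_comm a]

theorem stmt11 (n : ℕ) (T : GL (Fin (n + 1)) ℝ) (a : EuclideanSpace ℝ (Fin (n + 1)))
    (ha : a ≠ 0)
    (hlt : ‖Matrix.toEuclideanLin ((T⁻¹ : GL (Fin (n + 1)) ℝ) : Matrix (Fin (n + 1)) (Fin (n + 1)) ℝ) a‖ < 1) :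
    ∃ h : Metric.sphere (0 : EuclideanSpace ℝ (Fin (n + 1))) 1 ≃ₜ
          Metric.sphere (0 : EuclideanSpace ℝ (Fin (n + 1))) 1,
      ∀ x : Metric.sphere (0 : EuclideanSpace ℝ (Fin (n + 1))) 1,
        (h x : EuclideanSpace ℝ (Fin (n + 1))) =
          affAct (T : Matrix (Fin (n + 1)) (Fin (n + 1)) ℝ) a (x : EuclideanSpace ℝ (Fin (n + 1))) :=
  stmt11_general n T a hlt
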